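/- Let x : [s,t] → ℝ^d be a smooth path with step-3 signature 𝐱 = S₃(x)_{s,t}. Then the third level of the log-signature satisfies: the coefficient of [e_i,[e_i,e_j]] (i ≠ j) in π₃(ln 𝐱_{s,t}) equals 𝐱^{i,i,j}_{s,t} + (1/12)|x^i_{s,t}|² x^j_{s,t} - (1/2) x^i_{s,t} 𝐱^{i,j}_{s,t}, and the coefficient of [e_i,[e_j,e_k]] for j<i<k or j<k<i equals (1/6)(𝐱^{i,j,k}+𝐱^{j,i,k}-2𝐱^{i,k,j}+𝐱^{k,i,j}-2𝐱^{j,k,i}+𝐱^{k,j,i})_{s,t}, with respect to the Philip Hall basis {e_i, [e_i,e_j]_{i<j}, [e_i,[e_j,e_k]]_{j≤i<k or j<k≤i}} of the free step-3 nilpotent Lie algebra g₃(ℝ^d). -/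

import Mathlib

open MeasureTheory intervalIntegral

/-- The second iterated integral `𝐱^{i,j}_{s,t} = ∫_s^t (x^i_u - x^i_s) dx^j_u` of a
smooth path `x`. -/
noncomputable def iter2 {d : ℕ} (x : Fin d → ℝ → ℝ) (i j : Fin d) (s t : ℝ) : ℝ :=
  ∫ u in s..t, (x i u - x i s) * deriv (x j) u

/-- The third iterated integral `𝐱^{i,j,k}_{s,t}` of a smooth path `x`. -/
noncomputable def iter3 {d : ℕ} (x : Fin d → ℝ → ℝ) (i j k : Fin d) (s t : ℝ) : ℝ :=
  ∫ u in s..t, iter2 x i j s u * deriv (x k) u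

/-- The `(a,b,c)` tensor component of the Hall basis element `[e_i,[e_j,e_k]]`, namely of
`e_i⊗e_j⊗e_k - e_i⊗e_k⊗e_j - e_j⊗e_k⊗e_i + e_k⊗e_j⊗e_i`. -/
def hall3 {d : ℕ} (i j k a b c : Fin d) : ℝ :=
  (if a = i ∧ b = j ∧ c = k then 1 else 0) - (if a = i ∧ b = k ∧ c = j then 1 else 0)
    - (if a = j ∧ b = k ∧ c = i then 1 else 0) + (if a = k ∧ b = j ∧ c = i then 1 else 0)

/-- The `(a,b,c)` tensor component of the third level of the log-signature of `x` over
`[s,t]`: `π₃(ln 𝐱) = 𝐱³ - ½(𝐱¹⊗𝐱² + 𝐱²⊗𝐱¹) + ⅓ 𝐱¹⊗𝐱¹⊗𝐱¹`. -/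
noncomputable def logSig3 {d : ℕ} (x : Fin d → ℝ → ℝ) (a b c : Fin d) (s t : ℝ) : ℝ :=
  iter3 x a b c s t
    - (1 / 2) * ((x a t - x a s) * iter2 x b c s t + iter2 x a b s t * (x c t - x c s))
    + (1 / 3) * ((x a t - x a s) * (x b t - x b s) * (x c t - x c s))

section Aux

variable {d : ℕ} {x : Fin d → ℝ → ℝ}

lemma dcont (hx : ∀ i, ContDiff ℝ (⊤ : ℕ∞) (x i)) (i : Fin d) : Continuous (deriv (x i)) :=
  (hx i).continuous_deriv (by simp)

lemma icont (hx : ∀ i, ContDiff ℝ (⊤ : ℕ∞) (x i)) (i j : Fin d) (s : ℝ) :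
    Continuous (fun u => (x i u - x i s) * deriv (x j) u) :=
  (((hx i).continuous).sub continuous_const).mul (dcont hx j)

lemma iter2_hasDerivAt (hx : ∀ i, ContDiff ℝ (⊤ : ℕ∞) (x i)) (i j : Fin d) (s u : ℝ) :
    HasDerivAt (iter2 x i j s) ((x i u - x i s) * deriv (x j) u) u := by
  have hc := icont hx i j s
  exact intervalIntegral.integral_hasDerivAt_right (hc.intervalIntegrable _ _)
    (hc.stronglyMeasurableAtFilter _ _) hc.continuousAt

lemma shuf2 (hx : ∀ i, ContDiff ℝ (⊤ : ℕ∞) (x i)) (i j : Fin d) (s t : ℝ) :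
    iter2 x i j s t + iter2 x j i s t = (x i t - x i s) * (x j t - x j s) := by
  have h1 : ∀ u, HasDerivAt (fun v => (x i v - x i s) * (x j v - x j s))
      ((x i u - x i s) * deriv (x j) u + (x j u - x j s) * deriv (x i) u) u := by
    intro u
    have hi : HasDerivAt (fun v => x i v - x i s) (deriv (x i) u) u :=
      (((hx i).differentiable (by simp) u).hasDerivAt).sub_const _
    have hj : HasDerivAt (fun v => x j v - x j s) (deriv (x j) u) u :=
      (((hx j).differentiable (by simp) u).hasDerivAt).sub_const _
    have := hi.mul hj
    exact this.congr_deriv (by ring)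
  have key := intervalIntegral.integral_eq_sub_of_hasDerivAt
    (f := fun v => (x i v - x i s) * (x j v - x j s)) (a := s) (b := t)
    (fun u _ => h1 u) (((icont hx i j s).add (icont hx j i s)).intervalIntegrable s t)
  rw [intervalIntegral.integral_add ((icont hx i j s).intervalIntegrable s t)
      ((icont hx j i s).intervalIntegrable s t)] at key
  simp only [iter2]
  rw [key]; ring

lemma iter2_cont (hx : ∀ i, ContDiff ℝ (⊤ : ℕ∞) (x i)) (i j : Fin d) (s : ℝ) :
    Continuous (iter2 x i j s) :=
  continuous_iff_continuousAt.2 fun u => (iter2_hasDerivAt hx i j s u).continuousAt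

lemma shuf12 (hx : ∀ i, ContDiff ℝ (⊤ : ℕ∞) (x i)) (i j k : Fin d) (s t : ℝ) :
    (x i t - x i s) * iter2 x j k s t =
      iter3 x i j k s t + iter3 x j i k s t + iter3 x j k i s t := by
  have hF : ∀ u, HasDerivAt (fun v => (x i v - x i s) * iter2 x j k s v)
      (iter2 x j k s u * deriv (x i) u
        + ((iter2 x i j s u + iter2 x j i s u) * deriv (x k) u)) u := by
    intro u
    have hi : HasDerivAt (fun v => x i v - x i s) (deriv (x i) u) u :=
      (((hx i).differentiable (by simp) u).hasDerivAt).sub_const _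
    have := hi.mul (iter2_hasDerivAt hx j k s u)
    exact this.congr_deriv (Eq.symm (by
      linear_combination (deriv (x k) u) * (shuf2 hx i j s u)))
  have c1 : Continuous fun u => iter2 x j k s u * deriv (x i) u :=
    (iter2_cont hx j k s).mul (dcont hx i)
  have c2 : Continuous fun u => (iter2 x i j s u + iter2 x j i s u) * deriv (x k) u :=
    ((iter2_cont hx i j s).add (iter2_cont hx j i s)).mul (dcont hx k)
  have key := intervalIntegral.integral_eq_sub_of_hasDerivAt (a := s) (b := t)
    (fun u _ => hF u) ((c1.add c2).intervalIntegrable s t)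
  rw [intervalIntegral.integral_add (c1.intervalIntegrable s t) (c2.intervalIntegrable s t)]
    at key
  have split : (∫ u in s..t, (iter2 x i j s u + iter2 x j i s u) * deriv (x k) u)
      = iter3 x i j k s t + iter3 x j i k s t := by
    simp only [iter3, add_mul]
    exact (intervalIntegral.integral_add
      (((iter2_cont hx i j s).mul (dcont hx k)).intervalIntegrable s t)
      (((iter2_cont hx j i s).mul (dcont hx k)).intervalIntegrable s t))
  rw [split] at key
  have h3 : (∫ u in s..t, iter2 x j k s u * deriv (x i) u) = iter3 x j k i s t := rfl
  rw [h3] at key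
  simp only [sub_self, zero_mul, sub_zero] at key
  linarith [key]

lemma shuf111 (hx : ∀ i, ContDiff ℝ (⊤ : ℕ∞) (x i)) (i j k : Fin d) (s t : ℝ) :
    (x i t - x i s) * (x j t - x j s) * (x k t - x k s) =
      iter3 x i j k s t + iter3 x i k j s t + iter3 x j i k s t
        + iter3 x j k i s t + iter3 x k i j s t + iter3 x k j i s t := by
  have h1 := shuf12 hx i j k s t
  have h2 := shuf12 hx i k j s t
  have h3 := shuf2 hx j k s t
  linear_combination h1 + h2 - (x i t - x i s) * h3

lemma sum_if_const {α : Type*} [Fintype α] (p : Prop) [Decidable p] (f : α → ℝ) :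
    (∑ y : α, if p then f y else 0) = if p then ∑ y : α, f y else 0 := by
  split_ifs <;> simp

lemma collapse3 {d : ℕ} (g : Fin d → Fin d → Fin d → ℝ) (a b c : Fin d) :
    (∑ i : Fin d, ∑ j : Fin d, ∑ k : Fin d, g i j k * hall3 i j k a b c)
      = g a b c - g a c b - g c a b + g c b a := by
  simp [hall3, ite_and, mul_sub, mul_add, mul_ite, mul_one, mul_zero,
    Finset.sum_ite_eq, Finset.sum_sub_distrib, Finset.sum_add_distrib]

lemma collapse2 {d : ℕ} (h : Fin d → Fin d → ℝ) (a b c : Fin d) :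
    (∑ i : Fin d, ∑ j : Fin d, h i j * hall3 i i j a b c)
      = (if b = a then h a c else 0) - 2 * (if c = a then h a b else 0)
        + (if c = b then h b a else 0) := by
  simp only [hall3, ite_and, mul_sub, mul_add, mul_ite, mul_one, mul_zero,
    Finset.sum_ite_eq, Finset.sum_sub_distrib, Finset.sum_add_distrib, Finset.mem_univ,
    if_true, sum_if_const]
  split_ifs <;> ring

end Aux

/-- for a smooth path `x : [s,t] → ℝ^d`, the third level of the
log-signature expands in the Philip Hall basis of `g₃(ℝ^d)` with coefficient of
`[e_i,[e_i,e_j]]` (for `i ≠ j`) equal to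
`𝐱^{i,i,j} + (1/12)|x^i_{s,t}|² x^j_{s,t} - (1/2) x^i_{s,t} 𝐱^{i,j}`, and coefficient of
`[e_i,[e_j,e_k]]` for `j<i<k` or `j<k<i` equal to
`(1/6)(𝐱^{i,j,k}+𝐱^{j,i,k}-2𝐱^{i,k,j}+𝐱^{k,i,j}-2𝐱^{j,k,i}+𝐱^{k,j,i})`. -/
theorem stmt_18 (d : ℕ) (x : Fin d → ℝ → ℝ) (hx : ∀ i, ContDiff ℝ (⊤ : ℕ∞) (x i))
    (s t : ℝ) (hst : s ≤ t) :
    ∀ a b c : Fin d,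
      logSig3 x a b c s t =
        (∑ i : Fin d, ∑ j : Fin d, ∑ k : Fin d,
          if (j < i ∧ i < k) ∨ (j < k ∧ k < i) then
            (1 / 6) * (iter3 x i j k s t + iter3 x j i k s t - 2 * iter3 x i k j s t
              + iter3 x k i j s t - 2 * iter3 x j k i s t + iter3 x k j i s t)
              * hall3 i j k a b c
          else 0)
        + (∑ i : Fin d, ∑ j : Fin d,
          if i ≠ j then
            (iter3 x i i j s t + (1 / 12) * (x i t - x i s) ^ 2 * (x j t - x j s)
              - (1 / 2) * (x i t - x i s) * iter2 x i j s t) * hall3 i i j a b c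
          else 0) := by
  intro a b c
  have e1 : (∑ i : Fin d, ∑ j : Fin d, ∑ k : Fin d,
        if (j < i ∧ i < k) ∨ (j < k ∧ k < i) then
          (1 / 6) * (iter3 x i j k s t + iter3 x j i k s t - 2 * iter3 x i k j s t
            + iter3 x k i j s t - 2 * iter3 x j k i s t + iter3 x k j i s t)
            * hall3 i j k a b c
        else 0)
      = ∑ i : Fin d, ∑ j : Fin d, ∑ k : Fin d,
          (fun i j k => if (j < i ∧ i < k) ∨ (j < k ∧ k < i) then
            (1 / 6) * (iter3 x i j k s t + iter3 x j i k s t - 2 * iter3 x i k j s t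
              + iter3 x k i j s t - 2 * iter3 x j k i s t + iter3 x k j i s t)
          else 0) i j k * hall3 i j k a b c := by
    simp only [ite_mul, zero_mul]
  have e2 : (∑ i : Fin d, ∑ j : Fin d,
        if i ≠ j then
          (iter3 x i i j s t + (1 / 12) * (x i t - x i s) ^ 2 * (x j t - x j s)
            - (1 / 2) * (x i t - x i s) * iter2 x i j s t) * hall3 i i j a b c
        else 0)
      = ∑ i : Fin d, ∑ j : Fin d,
          (fun i j => if i ≠ j then
            (iter3 x i i j s t + (1 / 12) * (x i t - x i s) ^ 2 * (x j t - x j s)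
              - (1 / 2) * (x i t - x i s) * iter2 x i j s t)
          else 0) i j * hall3 i i j a b c := by
    simp only [ite_mul, zero_mul]
  rw [e1, e2, collapse3, collapse2]

  rcases lt_trichotomy a b with hab | rfl | hab
  · rcases lt_trichotomy b c with hbc | rfl | hbc
    · -- a < b < c
      have hac := hab.trans hbc
      simp only [logSig3, hab, hbc, hac, asymm hab, asymm hbc, asymm hac,
        hab.ne, hab.ne', hbc.ne, hbc.ne', hac.ne, hac.ne',
        and_true, true_and, and_false, false_and, or_false, false_or, or_self,
        if_true, if_false, lt_self_iff_false, ne_eq, not_false_eq_true, not_true,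
        ite_true, ite_false, lt_irrefl, zero_sub, sub_zero, add_zero, zero_add, mul_zero,
        neg_zero]
      linear_combination (-(1/2) : ℝ) * shuf12 hx a b c s t
        - (1/2 : ℝ) * shuf12 hx c a b s t + (1/3 : ℝ) * shuf111 hx a b c s t
    · -- a < b = c
      simp only [logSig3, hab, asymm hab, hab.ne, hab.ne',
        and_true, true_and, and_false, false_and, or_false, false_or, or_self,
        if_true, if_false, lt_self_iff_false, ne_eq, not_false_eq_true, not_true,
        ite_true, ite_false, lt_irrefl, zero_sub, sub_zero, add_zero, zero_add, mul_zero,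
        neg_zero]
      linear_combination (-(1/2) : ℝ) * shuf12 hx a b b s t
        - (1/2 : ℝ) * shuf12 hx b a b s t + (1/2 : ℝ) * shuf12 hx b b a s t
        + (1/4 : ℝ) * shuf111 hx a b b s t
    · rcases lt_trichotomy a c with hac | rfl | hac
      · -- a < c < b
        simp only [logSig3, hab, hbc, hac, asymm hab, asymm hbc, asymm hac,
          hab.ne, hab.ne', hbc.ne, hbc.ne', hac.ne, hac.ne',
          and_true, true_and, and_false, false_and, or_false, false_or, or_self,
          if_true, if_false, lt_self_iff_false, ne_eq, not_false_eq_true, not_true,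
          ite_true, ite_false, lt_irrefl, zero_sub, sub_zero, add_zero, zero_add, mul_zero,
          neg_zero]
        linear_combination (-(1/2) : ℝ) * shuf12 hx a b c s t
          - (1/2 : ℝ) * shuf12 hx c a b s t + (1/3 : ℝ) * shuf111 hx a b c s t
      · -- a = c, a < b  (word (a,b,a))
        simp only [logSig3, hab, asymm hab, hab.ne, hab.ne',
          and_true, true_and, and_false, false_and, or_false, false_or, or_self,
          if_true, if_false, lt_self_iff_false, ne_eq, not_false_eq_true, not_true,
          ite_true, ite_false, lt_irrefl, zero_sub, sub_zero, add_zero, zero_add, mul_zero,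
          neg_zero]
        linear_combination (-(3/2) : ℝ) * shuf12 hx a a b s t
          - (1/2 : ℝ) * shuf12 hx a b a s t + (1/2 : ℝ) * shuf111 hx a a b s t
      · -- c < a < b
        simp only [logSig3, hab, hbc, hac, asymm hab, asymm hbc, asymm hac,
          hab.ne, hab.ne', hbc.ne, hbc.ne', hac.ne, hac.ne',
          and_true, true_and, and_false, false_and, or_false, false_or, or_self,
          if_true, if_false, lt_self_iff_false, ne_eq, not_false_eq_true, not_true,
          ite_true, ite_false, lt_irrefl, zero_sub, sub_zero, add_zero, zero_add, mul_zero,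
          neg_zero]
        linear_combination (-(1/2) : ℝ) * shuf12 hx a b c s t
          - (1/2 : ℝ) * shuf12 hx c a b s t + (1/3 : ℝ) * shuf111 hx a b c s t
  · rcases lt_trichotomy a c with hac | rfl | hac
    · -- a = b < c  (word (a,a,c))
      simp only [logSig3, hac, asymm hac, hac.ne, hac.ne',
        and_true, true_and, and_false, false_and, or_false, false_or, or_self,
        if_true, if_false, lt_self_iff_false, ne_eq, not_false_eq_true, not_true,
        ite_true, ite_false, lt_irrefl, zero_sub, sub_zero, add_zero, zero_add, mul_zero,
        neg_zero]
      linear_combination (-(1/4) : ℝ) * (x c t - x c s) * shuf2 hx a a s t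
    · -- a = b = c
      simp only [logSig3, lt_self_iff_false, and_self, and_false, false_and, or_self,
        if_true, if_false, ne_eq, not_true, ite_true, ite_false, sub_zero, add_zero,
        zero_add, mul_zero, zero_sub, neg_zero, not_false_eq_true]
      linear_combination (-1 : ℝ) * shuf12 hx a a a s t + (1/3 : ℝ) * shuf111 hx a a a s t
    · -- c < a = b  (word (a,a,c))
      simp only [logSig3, hac, asymm hac, hac.ne, hac.ne',
        and_true, true_and, and_false, false_and, or_false, false_or, or_self,
        if_true, if_false, lt_self_iff_false, ne_eq, not_false_eq_true, not_true,
        ite_true, ite_false, lt_irrefl, zero_sub, sub_zero, add_zero, zero_add, mul_zero,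
        neg_zero]
      linear_combination (-(1/4) : ℝ) * (x c t - x c s) * shuf2 hx a a s t
  · rcases lt_trichotomy b c with hbc | rfl | hbc
    · rcases lt_trichotomy a c with hac | rfl | hac
      · -- b < a < c
        simp only [logSig3, hab, hbc, hac, asymm hab, asymm hbc, asymm hac,
          hab.ne, hab.ne', hbc.ne, hbc.ne', hac.ne, hac.ne',
          and_true, true_and, and_false, false_and, or_false, false_or, or_self,
          if_true, if_false, lt_self_iff_false, ne_eq, not_false_eq_true, not_true,
          ite_true, ite_false, lt_irrefl, zero_sub, sub_zero, add_zero, zero_add, mul_zero,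
          neg_zero]
        linear_combination (-(1/2) : ℝ) * shuf12 hx a b c s t
          - (1/2 : ℝ) * shuf12 hx c a b s t + (1/3 : ℝ) * shuf111 hx a b c s t
      · -- a = c, b < a  (word (a,b,a))
        simp only [logSig3, hab, asymm hab, hab.ne, hab.ne',
          and_true, true_and, and_false, false_and, or_false, false_or, or_self,
          if_true, if_false, lt_self_iff_false, ne_eq, not_false_eq_true, not_true,
          ite_true, ite_false, lt_irrefl, zero_sub, sub_zero, add_zero, zero_add, mul_zero,
          neg_zero]
        linear_combination (-(3/2) : ℝ) * shuf12 hx a a b s t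
          - (1/2 : ℝ) * shuf12 hx a b a s t + (1/2 : ℝ) * shuf111 hx a a b s t
      · -- b < c < a
        simp only [logSig3, hab, hbc, hac, asymm hab, asymm hbc, asymm hac,
          hab.ne, hab.ne', hbc.ne, hbc.ne', hac.ne, hac.ne',
          and_true, true_and, and_false, false_and, or_false, false_or, or_self,
          if_true, if_false, lt_self_iff_false, ne_eq, not_false_eq_true, not_true,
          ite_true, ite_false, lt_irrefl, zero_sub, sub_zero, add_zero, zero_add, mul_zero,
          neg_zero]
        linear_combination (-(1/2) : ℝ) * shuf12 hx a b c s t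
          - (1/2 : ℝ) * shuf12 hx c a b s t + (1/3 : ℝ) * shuf111 hx a b c s t
    · -- b = c < a  (word (a,b,b))
      simp only [logSig3, hab, asymm hab, hab.ne, hab.ne',
        and_true, true_and, and_false, false_and, or_false, false_or, or_self,
        if_true, if_false, lt_self_iff_false, ne_eq, not_false_eq_true, not_true,
        ite_true, ite_false, lt_irrefl, zero_sub, sub_zero, add_zero, zero_add, mul_zero,
        neg_zero]
      linear_combination (-(1/2) : ℝ) * shuf12 hx a b b s t
        - (1/2 : ℝ) * shuf12 hx b a b s t + (1/2 : ℝ) * shuf12 hx b b a s t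
        + (1/4 : ℝ) * shuf111 hx a b b s t
    · -- c < b < a
      have hac := hbc.trans hab
      simp only [logSig3, hab, hbc, hac, asymm hab, asymm hbc, asymm hac,
        hab.ne, hab.ne', hbc.ne, hbc.ne', hac.ne, hac.ne',
        and_true, true_and, and_false, false_and, or_false, false_or, or_self,
        if_true, if_false, lt_self_iff_false, ne_eq, not_false_eq_true, not_true,
        ite_true, ite_false, lt_irrefl, zero_sub, sub_zero, add_zero, zero_add, mul_zero,
        neg_zero]
      linear_combination (-(1/2) : ℝ) * shuf12 hx a b c s t
        - (1/2 : ℝ) * shuf12 hx c a b s t + (1/3 : ℝ) * shuf111 hx a b c s t
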